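/- For i ∈ ℕ let m_i = (2^{k_i} − 1)/k_i (so that f(m_i·k_i) = k_i), and set m₀ = 1. Suppose r ∈ [m_{i−1}, m_i) for some i ≥ 2, and define the sequence (r_ℓ)_{ℓ≥0} by r₀ = r and r_{ℓ+1} = r_ℓ^{f(r_ℓ)}. Then Σ_{ℓ=0}^∞ 1/√G(r_ℓ) ≤ Σ_{j=i}^∞ (ε_j + ε_{j−1}). -/

import Mathlib

open Finset Filter Topology

/-- `f(x) = log₂(x+1)`. -/
noncomputable def flog (x : ℝ) : ℝ := Real.logb 2 (x + 1)

/-- The growth conditions (2.12) and (2.13) on the sequence `(k_i)_{i ≥ 1}`. -/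
def kGood (k : ℕ → ℕ) : Prop :=
  (∀ i, 1 ≤ i → k i < k (i + 1)) ∧ (∀ i, 1 ≤ i → 1 ≤ k i) ∧
  (1 : ℝ) ≤ (2 / 3 : ℝ) * flog ((3 / 4 : ℝ) * flog (k 1)) ∧
  (3 : ℝ) ≤ Real.log (k 1) ∧
  (∀ r a : ℝ, (k 1 : ℝ) < r → 1 < a → (3 / 4 : ℝ) * a * flog r ≤ flog (r ^ a))

/-- `G(r) = max_{i ≥ 1} [f(r)f(k_i)/f(r k_i)] ∏_{j=1}^{i-1} f(k_j)/k_j`. -/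
noncomputable def Gfun (k : ℕ → ℕ) (r : ℝ) : ℝ :=
  sSup { c | ∃ i : ℕ, 1 ≤ i ∧
    c = flog r * flog (k i) / flog (r * (k i)) * ∏ j ∈ Finset.Ico 1 i, flog (k j) / (k j) }

/-- Condition (2.14) on the auxiliary decreasing summable sequence `(ε_j)_{j ≥ 1}`. -/
def epsGood (k : ℕ → ℕ) (ε : ℕ → ℝ) : Prop :=
  (∀ j, 1 ≤ j → 0 < ε j) ∧ (∀ j, 1 ≤ j → ε (j + 1) ≤ ε j) ∧
  Summable (fun j : ℕ => ε (j + 1)) ∧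
  ∀ j, 1 ≤ j →
    Real.sqrt ((6 / (3 * flog (k j))) * ∏ s ∈ Finset.Ico 1 j, (k s : ℝ) / flog (k s)) *
        (∑' ℓ : ℕ, ((8 / 3 : ℝ) * (k 1 : ℝ)) ^ (-(ℓ : ℝ) / 2)) +
      2 * Real.logb 2 (flog (k j)) / Real.sqrt (flog (k j)) *
        Real.sqrt (∏ s ∈ Finset.Ico 1 j, (k s : ℝ) / flog (k s)) < ε j

/-- The sequence `r₀ = r`, `r_{ℓ+1} = r_ℓ^{f(r_ℓ)}`. -/
noncomputable def rseq (r : ℝ) : ℕ → ℝ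
  | 0 => r
  | (ℓ + 1) => rseq r ℓ ^ flog (rseq r ℓ)


lemma sqrt_add_le' {x y : ℝ} (hx : 0 ≤ x) (hy : 0 ≤ y) :
    Real.sqrt (x + y) ≤ Real.sqrt x + Real.sqrt y := by
  have h : x + y ≤ (Real.sqrt x + Real.sqrt y)^2 := by
    nlinarith [Real.sq_sqrt hx, Real.sq_sqrt hy, Real.sqrt_nonneg x, Real.sqrt_nonneg y,
      mul_nonneg (Real.sqrt_nonneg x) (Real.sqrt_nonneg y)]
  have := Real.sqrt_le_sqrt h
  rwa [Real.sqrt_sq (by positivity)] at this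

lemma flog_pos {x : ℝ} (hx : 0 < x) : 0 < flog x :=
  Real.logb_pos one_lt_two (by simp [flog]; linarith)

lemma flog_mono {x y : ℝ} (hx : 0 < x) (hxy : x ≤ y) : flog x ≤ flog y := by
  unfold flog
  rw [Real.logb_le_logb one_lt_two (by linarith) (by linarith)]
  linarith

lemma flog_lt_flog {x y : ℝ} (hx : 0 < x) (hxy : x < y) : flog x < flog y := by
  unfold flog
  apply Real.logb_lt_logb one_lt_two (by linarith) (by linarith)

lemma flog_mul_le {x y : ℝ} (hx : 0 < x) (hy : 0 < y) :
    flog (x * y) ≤ flog x + flog y := by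
  unfold flog
  rw [← Real.logb_mul (by positivity) (by positivity)]
  rw [Real.logb_le_logb one_lt_two (by positivity) (by positivity)]
  nlinarith

lemma nat_sq_le_pow {K : ℕ} (hK : 21 ≤ K) : 2 * K^2 ≤ 2^K := by
  induction K, hK using Nat.le_induction with
  | base => norm_num
  | succ n hn ih =>
    have h1 : 2*(n+1)^2 ≤ 2*(2*n^2) := by nlinarith
    calc 2*(n+1)^2 ≤ 2*(2*n^2) := h1
    _ ≤ 2 * 2^n := by omega
    _ = 2^(n+1) := by ring

lemma logb_le_sub_two_sqrt {x : ℝ} (hx : 21 ≤ x) :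
    Real.logb 2 x ≤ x - 2 * Real.sqrt x := by
  have hx0 : (0:ℝ) < x := by linarith
  set t := Real.sqrt (Real.sqrt x) with ht
  have ht0 : 0 ≤ t := Real.sqrt_nonneg _
  have ht2 : t^2 = Real.sqrt x := Real.sq_sqrt (Real.sqrt_nonneg x)
  have ht4 : t^4 = x := by
    have h : (t^2)^2 = x := by rw [ht2]; exact Real.sq_sqrt hx0.le
    nlinarith [h]
  have htpos : 0 < t := by
    rcases ht0.lt_or_eq with h | h
    · exact h
    · exfalso; rw [← h] at ht4; norm_num at ht4; linarith
  have hlogt : Real.log t ≤ t - 1 := Real.log_le_sub_one_of_pos htpos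
  have hlog2 : (0.6931471803 : ℝ) < Real.log 2 := Real.log_two_gt_d9
  have htlb : (2.14 : ℝ) ≤ t := by
    by_contra h
    push_neg at h
    nlinarith [pow_le_pow_left₀ ht0 h.le 4]
  have key : Real.log (t^4) ≤ (t^4 - 2*t^2) * Real.log 2 := by
    have h4 : Real.log (t^4) = 4 * Real.log t := by
      rw [Real.log_pow]; push_cast; ring
    rw [h4]
    have h1 : 0 ≤ t - 2.14 := by linarith
    nlinarith [mul_nonneg h1 (sq_nonneg t), mul_nonneg h1 h1, mul_nonneg (mul_nonneg h1 h1) h1,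
      mul_nonneg h1 (mul_nonneg h1 (sq_nonneg t)), sq_nonneg t,
      mul_nonneg h1 (le_of_lt (lt_trans (by norm_num) hlog2))]
  rw [Real.logb, div_le_iff₀ (Real.log_pos one_lt_two)]
  calc Real.log x = Real.log (t^4) := by rw [ht4]
  _ ≤ (t^4 - 2*t^2) * Real.log 2 := key
  _ = (x - 2 * Real.sqrt x) * Real.log 2 := by rw [ht4, ← ht2]

noncomputable def Pfun (k : ℕ → ℕ) (n : ℕ) : ℝ := ∏ s ∈ Finset.Ico 1 n, (k s : ℝ) / flog (k s)

lemma flog_nat_le {m : ℕ} (hm : 1 ≤ m) : flog m ≤ m := by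
  unfold flog
  have h1 : ((m:ℝ) + 1) ≤ 2^(m:ℕ) := by
    exact_mod_cast (Nat.lt_two_pow_self (n := m))
  calc Real.logb 2 ((m:ℝ)+1) ≤ Real.logb 2 ((2:ℝ)^(m:ℕ)) := by
        rw [Real.logb_le_logb one_lt_two (by positivity) (by positivity)]; exact h1
  _ = m := by rw [Real.logb_pow]; simp

lemma flog_nat_pos {m : ℕ} (hm : 1 ≤ m) : 0 < flog m :=
  flog_pos (by exact_mod_cast hm)

lemma one_le_flog {r : ℝ} (hr : 1 ≤ r) : 1 ≤ flog r := by
  have : flog 1 = 1 := by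
    unfold flog; norm_num
  rw [← this]; exact flog_mono one_pos hr

section
variable {k : ℕ → ℕ} (hks : ∀ s, 1 ≤ s → 1 ≤ k s)

include hks in
lemma Pfun_pos {n : ℕ} : 0 < Pfun k n := by
  apply Finset.prod_pos
  intro s hs
  have h1 := hks s (Finset.mem_Ico.1 hs).1
  have := flog_nat_pos h1
  positivity

include hks in
lemma one_div_sqrt_Gfun_le {n : ℕ} (hn : 1 ≤ n) {r : ℝ} (hr : 1 ≤ r) :
    1 / Real.sqrt (Gfun k r) ≤
      Real.sqrt (Pfun k n / flog (k n)) + Real.sqrt (Pfun k n / flog r) := by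
  have hr0 : (0:ℝ) < r := by linarith
  have hfr : 1 ≤ flog r := one_le_flog hr
  have hfkn : 0 < flog (k n) := flog_nat_pos (hks n hn)
  have hkn0 : (0:ℝ) < k n := by exact_mod_cast hks n hn
  have hfrkn : 0 < flog (r * k n) := flog_pos (by positivity)
  set Q := ∏ j ∈ Finset.Ico 1 n, flog (k j) / (k j) with hQ
  have hQpos : 0 < Q := by
    apply Finset.prod_pos
    intro s hs
    have h1 := hks s (Finset.mem_Ico.1 hs).1
    have := flog_nat_pos h1
    have : (0:ℝ) < k s := by exact_mod_cast h1
    positivity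
  set c := flog r * flog (k n) / flog (r * (k n)) * Q with hc
  have hcpos : 0 < c := by
    apply mul_pos _ hQpos
    positivity
  have hbdd : BddAbove { c | ∃ i : ℕ, 1 ≤ i ∧
      c = flog r * flog (k i) / flog (r * (k i)) * ∏ j ∈ Finset.Ico 1 i, flog (k j) / (k j) } := by
    refine ⟨flog r, ?_⟩
    rintro x ⟨m, hm, rfl⟩
    have hkm0 : (0:ℝ) < k m := by exact_mod_cast hks m hm
    have hfkm : 0 < flog (k m) := flog_pos hkm0
    have hfrkm : 0 < flog (r * k m) := flog_pos (by positivity)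
    have h1 : flog (k m) ≤ flog (r * k m) := flog_mono hkm0 (by nlinarith)
    have hprod1 : (∏ j ∈ Finset.Ico 1 m, flog (k j) / (k j)) ≤ 1 := by
      apply Finset.prod_le_one
      · intro s hs
        have h1 := hks s (Finset.mem_Ico.1 hs).1
        have := flog_nat_pos h1
        have : (0:ℝ) < k s := by exact_mod_cast h1
        positivity
      · intro s hs
        have h1 := hks s (Finset.mem_Ico.1 hs).1
        have hks0 : (0:ℝ) < k s := by exact_mod_cast h1
        rw [div_le_one hks0]
        exact flog_nat_le h1
    have hprod0 : 0 ≤ ∏ j ∈ Finset.Ico 1 m, flog (k j) / (k j) := by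
      apply Finset.prod_nonneg
      intro s hs
      have h1 := hks s (Finset.mem_Ico.1 hs).1
      have := flog_nat_pos h1
      have : (0:ℝ) < k s := by exact_mod_cast h1
      positivity
    calc flog r * flog (k m) / flog (r * ↑(k m)) * ∏ j ∈ Finset.Ico 1 m, flog (k j) / (k j)
        ≤ flog r * flog (k m) / flog (r * ↑(k m)) * 1 := by
          apply mul_le_mul_of_nonneg_left hprod1
          positivity
      _ ≤ flog r := by
          rw [mul_one, div_le_iff₀ hfrkm]
          nlinarith
  have hmem : c ∈ { c | ∃ i : ℕ, 1 ≤ i ∧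
      c = flog r * flog (k i) / flog (r * (k i)) * ∏ j ∈ Finset.Ico 1 i, flog (k j) / (k j) } :=
    ⟨n, hn, rfl⟩
  have hG : c ≤ Gfun k r := le_csSup hbdd hmem
  have hGpos : 0 < Gfun k r := lt_of_lt_of_le hcpos hG
  have step1 : 1 / Real.sqrt (Gfun k r) ≤ 1 / Real.sqrt c := by
    apply one_div_le_one_div_of_le (Real.sqrt_pos.2 hcpos)
    exact Real.sqrt_le_sqrt hG
  have step2 : 1 / Real.sqrt c = Real.sqrt c⁻¹ := by
    rw [Real.sqrt_inv, one_div]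
  have hQinv : Q⁻¹ = Pfun k n := by
    rw [hQ, ← Finset.prod_inv_distrib]
    exact Finset.prod_congr rfl (fun j hj => inv_div _ _)
  have hcinv : c⁻¹ = flog (r * k n) / (flog r * flog (k n)) * Pfun k n := by
    rw [hc, mul_inv, inv_div, hQinv]
  have hsub : flog (r * k n) ≤ flog r + flog (k n) := flog_mul_le hr0 hkn0
  have hP := Pfun_pos hks (n := n)
  have hle : c⁻¹ ≤ Pfun k n / flog (k n) + Pfun k n / flog r := by
    rw [hcinv]
    have h2 : flog (r * ↑(k n)) / (flog r * flog (k n)) ≤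
        (flog r + flog (k n)) / (flog r * flog (k n)) := by
      apply div_le_div_of_nonneg_right hsub (by positivity)
    have h3 : (flog r + flog (k n)) / (flog r * flog (k n)) * Pfun k n
        = Pfun k n / flog (k n) + Pfun k n / flog r := by
      field_simp
    calc flog (r * ↑(k n)) / (flog r * flog (k n)) * Pfun k n
        ≤ (flog r + flog (k n)) / (flog r * flog (k n)) * Pfun k n :=
          mul_le_mul_of_nonneg_right h2 hP.le
      _ = _ := h3
  calc 1 / Real.sqrt (Gfun k r) ≤ 1 / Real.sqrt c := step1
    _ = Real.sqrt c⁻¹ := step2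
    _ ≤ Real.sqrt (Pfun k n / flog (k n) + Pfun k n / flog r) := Real.sqrt_le_sqrt hle
    _ ≤ _ := sqrt_add_le' (by positivity) (by positivity)
end

lemma Pfun_succ {k : ℕ → ℕ} {n : ℕ} (hn : 1 ≤ n) :
    Pfun k (n+1) = Pfun k n * ((k n : ℝ)/flog (k n)) :=
  Finset.prod_Ico_succ_top hn _

noncomputable def Mv (k : ℕ → ℕ) (n : ℕ) : ℝ := ((2:ℝ)^(k n) - 1)/(k n)

lemma k1_ge {k : ℕ → ℕ} (hk : kGood k) : 21 ≤ k 1 := by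
  have h1 : 1 ≤ k 1 := hk.2.1 1 le_rfl
  have hpos : (0:ℝ) < k 1 := by exact_mod_cast h1
  have h3 : Real.exp 3 ≤ k 1 := by
    have := hk.2.2.2.1
    calc Real.exp 3 ≤ Real.exp (Real.log (k 1)) := Real.exp_le_exp.2 this
    _ = k 1 := Real.exp_log hpos
  have h30 : Real.exp 3 = Real.exp 1 ^ (3:ℕ) := by
    rw [show (3:ℝ) = 1+1+1 by norm_num, Real.exp_add, Real.exp_add]
    ring
  have he : (2.7182818283:ℝ)^(3:ℕ) < Real.exp 3 := by
    rw [h30]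
    exact pow_lt_pow_left₀ Real.exp_one_gt_d9 (by norm_num) (by norm_num)
  by_contra h
  push_neg at h
  have : (k 1 : ℝ) ≤ 20 := by exact_mod_cast Nat.lt_succ_iff.mp h
  nlinarith

lemma k_mono {k : ℕ → ℕ} (hk : kGood k) {a b : ℕ} (ha : 1 ≤ a) (hab : a ≤ b) : k a ≤ k b := by
  induction b, hab using Nat.le_induction with
  | base => exact le_rfl
  | succ n hn ih => exact le_trans ih (le_of_lt (hk.1 n (le_trans ha hn)))

lemma k_ge_21 {k : ℕ → ℕ} (hk : kGood k) {n : ℕ} (hn : 1 ≤ n) : 21 ≤ k n :=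
  le_trans (k1_ge hk) (k_mono hk le_rfl hn)

section Mvfacts
variable {k : ℕ → ℕ} (hk : kGood k) {n : ℕ} (hn : 1 ≤ n)

include hk hn

lemma Mv_ge_succ : (k n : ℝ) + 1 ≤ Mv k n := by
  have h21 := k_ge_21 hk hn
  have hK : (21:ℝ) ≤ k n := by exact_mod_cast h21
  have hp : (2:ℝ) * (k n)^2 ≤ 2^(k n) := by exact_mod_cast nat_sq_le_pow h21
  rw [Mv, le_div_iff₀ (by linarith)]
  nlinarith

lemma Mv_ge_k : (k n : ℝ) ≤ Mv k n := le_trans (by linarith) (Mv_ge_succ hk hn)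

lemma flog_Mv_ge : (k n : ℝ) - Real.logb 2 (k n) ≤ flog (Mv k n) := by
  have h21 := k_ge_21 hk hn
  have hK : (21:ℝ) ≤ k n := by exact_mod_cast h21
  have h2 : (2:ℝ)^(k n) / (k n) ≤ Mv k n + 1 := by
    rw [Mv, div_add' _ _ _ (by linarith : (k n:ℝ) ≠ 0)]
    apply div_le_div_of_nonneg_right _ (by linarith)
    linarith
  have hpow : (0:ℝ) < 2^(k n) := by positivity
  calc (k n : ℝ) - Real.logb 2 (k n) = Real.logb 2 ((2:ℝ)^(k n) / (k n)) := by
        rw [Real.logb_div (by positivity) (by linarith), Real.logb_pow]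
        simp
  _ ≤ Real.logb 2 (Mv k n + 1) := by
        have hMv1 : (0:ℝ) < Mv k n + 1 :=
          lt_of_lt_of_le (by positivity : (0:ℝ) < 2^(k n)/(k n)) h2
        rw [Real.logb_le_logb one_lt_two (by positivity) hMv1]
        exact h2
  _ = flog (Mv k n) := rfl

lemma flog_Mv_ge_sqrt : 2 * Real.sqrt (k n) ≤ flog (Mv k n) := by
  have h21 := k_ge_21 hk hn
  have hK : (21:ℝ) ≤ k n := by exact_mod_cast h21
  have := flog_Mv_ge hk hn
  have := logb_le_sub_two_sqrt hK
  linarith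

lemma flog_lt_of_lt_Mv {x : ℝ} (hx : 0 < x) (hxM : x < Mv k n) : flog x < (k n : ℝ) := by
  have h21 := k_ge_21 hk hn
  have hK : (21:ℝ) ≤ k n := by exact_mod_cast h21
  have h2 : Mv k n + 1 ≤ (2:ℝ)^(k n) := by
    rw [Mv, div_add' _ _ _ (by linarith : (k n:ℝ) ≠ 0), div_le_iff₀ (by linarith)]
    have hpow : (1:ℝ) ≤ 2^(k n) := one_le_pow₀ (by norm_num)
    nlinarith
  calc flog x = Real.logb 2 (x + 1) := rfl
  _ < Real.logb 2 ((2:ℝ)^(k n)) := by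
      apply Real.logb_lt_logb one_lt_two (by linarith)
      linarith
  _ = k n := by rw [Real.logb_pow]; simp
end Mvfacts

lemma logb2_ge_of_pow_le {c : ℝ} {m : ℕ} (h : (2:ℝ)^m ≤ c) : (m:ℝ) ≤ Real.logb 2 c := by
  have h0 : (0:ℝ) < 2^m := by positivity
  have h1 : Real.logb 2 ((2:ℝ)^m) = m := by
    rw [Real.logb_pow]; simp
  rw [← h1]
  rw [Real.logb_le_logb one_lt_two h0 (by linarith)]
  exact h

section rseqfacts
variable {k : ℕ → ℕ} (hk : kGood k) {r : ℝ}
  (hA : (k 1 : ℝ) < r) (hB : 9 ≤ flog r) (hC : 1 ≤ r)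

include hB hC in
lemma rseq_ge_base : ∀ ℓ, r ≤ rseq r ℓ := by
  intro ℓ
  induction ℓ with
  | zero => exact le_rfl
  | succ n ih =>
    have h1 : (1:ℝ) ≤ rseq r n := le_trans hC ih
    have hf : 1 ≤ flog (rseq r n) :=
      le_trans (by linarith) (flog_mono (by linarith) ih)
    calc r ≤ rseq r n := ih
    _ = rseq r n ^ (1:ℝ) := (Real.rpow_one _).symm
    _ ≤ rseq r n ^ flog (rseq r n) := Real.rpow_le_rpow_of_exponent_le h1 hf
    _ = rseq r (n+1) := rfl

include hB hC in
lemma flog_rseq_ge : ∀ ℓ, 9 ≤ flog (rseq r ℓ) := fun ℓ =>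
  le_trans hB (flog_mono (by linarith) (rseq_ge_base hB hC ℓ))

include hB hC in
lemma rseq_mono' : ∀ ℓ t, rseq r ℓ ≤ rseq r (ℓ + t) := by
  intro ℓ t
  induction t with
  | zero => exact le_rfl
  | succ n ih =>
    have h1 : (1:ℝ) ≤ rseq r (ℓ+n) := le_trans hC (rseq_ge_base hB hC _)
    have hf : 1 ≤ flog (rseq r (ℓ+n)) := le_trans (by norm_num) (flog_rseq_ge hB hC _)
    calc rseq r ℓ ≤ rseq r (ℓ+n) := ih
    _ = rseq r (ℓ+n) ^ (1:ℝ) := (Real.rpow_one _).symm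
    _ ≤ rseq r (ℓ+n) ^ flog (rseq r (ℓ+n)) := Real.rpow_le_rpow_of_exponent_le h1 hf
    _ = rseq r (ℓ+n+1) := rfl

include hk hA hB hC in
lemma rseq_sq : ∀ ℓ, (3/4) * flog (rseq r ℓ)^2 ≤ flog (rseq r (ℓ+1)) := by
  intro ℓ
  have hx : (k 1 : ℝ) < rseq r ℓ := lt_of_lt_of_le hA (rseq_ge_base hB hC ℓ)
  have ha : 1 < flog (rseq r ℓ) := lt_of_lt_of_le (by norm_num) (flog_rseq_ge hB hC ℓ)
  have := hk.2.2.2.2 (rseq r ℓ) (flog (rseq r ℓ)) hx ha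
  calc (3/4) * flog (rseq r ℓ)^2 = (3/4) * flog (rseq r ℓ) * flog (rseq r ℓ) := by ring
  _ ≤ flog (rseq r ℓ ^ flog (rseq r ℓ)) := this
  _ = flog (rseq r (ℓ+1)) := rfl

include hk hA hB hC in
lemma rseq_loggrowth : ∀ ℓ t, 3*(3/2:ℝ)^t ≤ Real.logb 2 (flog (rseq r (ℓ+t))) := by
  intro ℓ t
  induction t with
  | zero =>
    simp only [pow_zero, mul_one, Nat.add_zero]
    have h9 : (9:ℝ) ≤ flog (rseq r ℓ) := flog_rseq_ge hB hC ℓ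
    have : ((3:ℕ):ℝ) ≤ Real.logb 2 (flog (rseq r ℓ)) :=
      logb2_ge_of_pow_le (by norm_num; linarith)
    exact_mod_cast this
  | succ t ih =>
    set f := flog (rseq r (ℓ+t)) with hf
    have h9 : (9:ℝ) ≤ f := flog_rseq_ge hB hC _
    have hstep : (3/4) * f^2 ≤ flog (rseq r (ℓ+t+1)) := rseq_sq hk hA hB hC (ℓ+t)
    have hs : Real.sqrt (f^3) ≤ (3/4)*f^2 := by
      have h1 : f^3 ≤ ((3/4)*f^2)^2 := by nlinarith
      calc Real.sqrt (f^3) ≤ Real.sqrt (((3/4)*f^2)^2) := Real.sqrt_le_sqrt h1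
      _ = (3/4)*f^2 := Real.sqrt_sq (by positivity)
    have hsp : 0 < Real.sqrt (f^3) := Real.sqrt_pos.2 (by positivity)
    have hlogs : Real.logb 2 (Real.sqrt (f^3)) = (3/2) * Real.logb 2 f := by
      rw [Real.logb, Real.logb, Real.log_sqrt (by positivity), Real.log_pow]
      push_cast; ring
    have hmono : Real.logb 2 (Real.sqrt (f^3)) ≤ Real.logb 2 (flog (rseq r (ℓ+t+1))) := by
      rw [Real.logb_le_logb one_lt_two hsp (by linarith)]
      linarith
    calc 3*(3/2:ℝ)^(t+1) = (3/2) * (3*(3/2)^t) := by ring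
    _ ≤ (3/2) * Real.logb 2 f := by nlinarith
    _ = Real.logb 2 (Real.sqrt (f^3)) := hlogs.symm
    _ ≤ _ := by rw [show ℓ + (t+1) = ℓ + t + 1 by ring]; exact hmono

include hk hA hB hC in
lemma rseq_fourpow {ℓ₀ : ℕ} {K : ℝ} (hK : 21 ≤ K) (hstart : 2*Real.sqrt K ≤ flog (rseq r ℓ₀)) :
    ∀ t, 3*K*4^t ≤ flog (rseq r (ℓ₀+1+t)) := by
  have hsqK : Real.sqrt K ^ 2 = K := Real.sq_sqrt (by linarith)
  intro t
  induction t with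
  | zero =>
    have h1 := rseq_sq hk hA hB hC ℓ₀
    have h2 : (3/4) * (2*Real.sqrt K)^2 ≤ (3/4) * flog (rseq r ℓ₀)^2 := by
      have h0 : 0 ≤ 2*Real.sqrt K := by positivity
      nlinarith
    simp only [pow_zero]
    nlinarith
  | succ t ih =>
    set f := flog (rseq r (ℓ₀+1+t)) with hf
    have h63 : (63:ℝ) ≤ f := by nlinarith [pow_pos (show (0:ℝ) < 4 by norm_num) t, one_le_pow₀ (show (1:ℝ) ≤ 4 by norm_num) (n := t)]
    have hstep : (3/4) * f^2 ≤ flog (rseq r (ℓ₀+1+t+1)) := rseq_sq hk hA hB hC (ℓ₀+1+t)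
    have h4f : 4*f ≤ (3/4)*f^2 := by nlinarith
    have hge : 3*K*4^t ≤ f := ih
    calc 3*K*4^(t+1) = 4*(3*K*4^t) := by ring
    _ ≤ 4*f := by linarith
    _ ≤ (3/4)*f^2 := h4f
    _ ≤ flog (rseq r (ℓ₀+1+t+1)) := hstep
    _ = flog (rseq r (ℓ₀+1+(t+1))) := by rw [show ℓ₀+1+t+1 = ℓ₀+1+(t+1) by ring]
end rseqfacts

lemma logb2_threehalf : (1/2:ℝ) ≤ Real.logb 2 (3/2) := by
  have h2 : (0:ℝ) < Real.log 2 := Real.log_pos one_lt_two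
  have h94 : Real.log 2 ≤ Real.log (9/4) := Real.log_le_log (by norm_num) (by norm_num)
  have h32 : Real.log (9/4) = 2 * Real.log (3/2) := by
    rw [show (9/4:ℝ) = (3/2)^2 by norm_num, Real.log_pow]
    push_cast; ring
  rw [Real.logb, le_div_iff₀ h2]
  linarith

set_option maxHeartbeats 1600000 in
/-- Lemma 2.4: if `m_i = (2^{k_i}-1)/k_i` (so `f(m_i k_i) = k_i`), `m₀ = 1`, and
`r ∈ [m_{i-1}, m_i)` for some `i ≥ 2`, then `Σ_ℓ 1/√G(r_ℓ) ≤ Σ_{j=i}^∞ (ε_j + ε_{j-1})`. -/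
theorem statement7 (k : ℕ → ℕ) (hk : kGood k) (ε : ℕ → ℝ) (hε : epsGood k ε)
    (i : ℕ) (hi : 2 ≤ i) (r : ℝ)
    (hr1 : ((2 : ℝ) ^ (k (i - 1)) - 1) / (k (i - 1)) ≤ r)
    (hr2 : r < ((2 : ℝ) ^ (k i) - 1) / (k i)) :
    Summable (fun ℓ : ℕ => 1 / Real.sqrt (Gfun k (rseq r ℓ))) ∧
    ∑' ℓ : ℕ, 1 / Real.sqrt (Gfun k (rseq r ℓ)) ≤
      ∑' j : ℕ, (ε (i + j) + ε (i + j - 1)) := by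
  classical
  have hks : ∀ s, 1 ≤ s → 1 ≤ k s := hk.2.1
  have hi1 : 1 ≤ i - 1 := by omega
  have hii : i - 1 + 1 = i := by omega
  set a : ℕ → ℝ := fun ℓ => 1 / Real.sqrt (Gfun k (rseq r ℓ)) with ha
  have ha_nonneg : ∀ ℓ, 0 ≤ a ℓ := fun ℓ => by positivity
  -- basic facts about r
  have hrM : Mv k (i-1) ≤ r := by unfold Mv; exact hr1
  have hrM2 : r < Mv k i := by unfold Mv; exact hr2
  have hKi1 : (21:ℝ) ≤ k (i-1) := by exact_mod_cast k_ge_21 hk hi1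
  have hMvpos : (0:ℝ) < Mv k (i-1) := by
    have := Mv_ge_succ hk hi1; linarith
  have hC : 1 ≤ r := by
    have := Mv_ge_succ hk hi1; linarith
  have hA : (k 1:ℝ) < r := by
    have h1 : (k 1:ℝ) ≤ k (i-1) := by exact_mod_cast k_mono hk le_rfl hi1
    have := Mv_ge_succ hk hi1
    linarith
  have hsqrt21 : (4.5:ℝ) ≤ Real.sqrt (k (i-1)) := by
    rw [show (4.5:ℝ) = Real.sqrt (4.5^2) from (Real.sqrt_sq (by norm_num)).symm]
    apply Real.sqrt_le_sqrt; nlinarith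
  have hB : 9 ≤ flog r := by
    have h1 : 2*Real.sqrt (k (i-1)) ≤ flog (Mv k (i-1)) := flog_Mv_ge_sqrt hk hi1
    have h2 : flog (Mv k (i-1)) ≤ flog r := flog_mono hMvpos hrM
    linarith
  -- facts about the sequence
  have hr_ge1 : ∀ ℓ, 1 ≤ rseq r ℓ := fun ℓ => le_trans hC (rseq_ge_base hB hC ℓ)
  have hr_pos : ∀ ℓ, (0:ℝ) < rseq r ℓ := fun ℓ => lt_of_lt_of_le one_pos (hr_ge1 ℓ)
  have hfr9 : ∀ ℓ, 9 ≤ flog (rseq r ℓ) := flog_rseq_ge hB hC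
  -- window function
  have hkadd : ∀ t, t ≤ k (i + t) := by
    intro t
    induction t with
    | zero => exact Nat.zero_le _
    | succ n ih =>
      have h := hk.1 (i+n) (by omega)
      have he : i + (n+1) = (i+n)+1 := rfl
      rw [he]
      omega
  have hex : ∀ ℓ, ∃ n, i ≤ n ∧ rseq r ℓ < Mv k n := by
    intro ℓ
    refine ⟨i + (⌈rseq r ℓ⌉₊ + 1), by omega, ?_⟩
    have h1 : (⌈rseq r ℓ⌉₊ + 1 : ℝ) ≤ k (i + (⌈rseq r ℓ⌉₊ + 1)) := by
      exact_mod_cast hkadd (⌈rseq r ℓ⌉₊ + 1)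
    have h2 : rseq r ℓ ≤ ⌈rseq r ℓ⌉₊ := Nat.le_ceil _
    have h3 : (k (i + (⌈rseq r ℓ⌉₊ + 1)) : ℝ) ≤ Mv k (i + (⌈rseq r ℓ⌉₊ + 1)) :=
      Mv_ge_k hk (by omega)
    linarith
  set w : ℕ → ℕ := fun ℓ => Nat.find (hex ℓ) with hw
  have hw_ge : ∀ ℓ, i ≤ w ℓ := fun ℓ => (Nat.find_spec (hex ℓ)).1
  have hw_lt : ∀ ℓ, rseq r ℓ < Mv k (w ℓ) := fun ℓ => (Nat.find_spec (hex ℓ)).2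
  have hw_ge' : ∀ ℓ, Mv k (w ℓ - 1) ≤ rseq r ℓ := by
    intro ℓ
    rcases Nat.lt_or_ge i (w ℓ) with h | h
    · have hm : w ℓ - 1 < w ℓ := by omega
      have hmin := Nat.find_min (hex ℓ) hm
      by_contra hc
      push_neg at hc
      exact hmin ⟨by omega, hc⟩
    · have hwi : w ℓ = i := le_antisymm h (hw_ge ℓ)
      rw [hwi]
      exact le_trans hrM (rseq_ge_base hB hC ℓ)
    -- epsilon facts
  have hPpos : ∀ n : ℕ, 0 < Pfun k n := fun n => Pfun_pos hks
  have hfk_pos : ∀ n, 1 ≤ n → 0 < flog (k n) := fun n hn => flog_nat_pos (hks n hn)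
  have hfk4 : ∀ n, 1 ≤ n → 4 ≤ flog (k n) := by
    intro n hn
    have h21 : (21:ℝ) ≤ k n := by exact_mod_cast k_ge_21 hk hn
    have h : ((4:ℕ):ℝ) ≤ Real.logb 2 ((k n : ℝ) + 1) := logb2_ge_of_pow_le (by norm_num; linarith)
    unfold flog
    exact_mod_cast h
  have hL2 : ∀ n, 1 ≤ n → 2 ≤ Real.logb 2 (flog (k n)) := by
    intro n hn
    have : ((2:ℕ):ℝ) ≤ Real.logb 2 (flog (k n)) := logb2_ge_of_pow_le (by
      norm_num
      exact hfk4 n hn)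
    exact_mod_cast this
  set u : ℕ → ℝ := fun n => Real.sqrt (Pfun k n / flog (k n)) with hu
  have hu_nonneg : ∀ n, 0 ≤ u n := fun n => Real.sqrt_nonneg _
  have hSnn : 0 ≤ ∑' ℓ : ℕ, ((8/3:ℝ)*(k 1:ℝ))^(-(ℓ:ℝ)/2) :=
    tsum_nonneg (fun ℓ => Real.rpow_nonneg (by positivity) _)
  have hepsT2 : ∀ n, 1 ≤ n → 2*Real.logb 2 (flog (k n)) * u n ≤ ε n := by
    intro n hn
    have h := hε.2.2.2 n hn
    have hT1 : 0 ≤ Real.sqrt ((6 / (3 * flog (k n))) * ∏ s ∈ Finset.Ico 1 n, (k s : ℝ) / flog (k s)) *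
        (∑' ℓ : ℕ, ((8 / 3 : ℝ) * (k 1 : ℝ)) ^ (-(ℓ : ℝ) / 2)) :=
      mul_nonneg (Real.sqrt_nonneg _) hSnn
    have hT2eq : 2 * Real.logb 2 (flog (k n)) / Real.sqrt (flog (k n)) *
        Real.sqrt (∏ s ∈ Finset.Ico 1 n, (k s : ℝ) / flog (k s)) =
        2*Real.logb 2 (flog (k n)) * u n := by
      rw [hu]
      simp only
      rw [Real.sqrt_div (hPpos n).le, Pfun]
      ring
    rw [hT2eq] at h
    linarith
  have heps4 : ∀ n, 1 ≤ n → 4 * u n ≤ ε n := by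
    intro n hn
    have h1 := hepsT2 n hn
    have h2 := hL2 n hn
    nlinarith [hu_nonneg n]
  -- the fiber bound
  have fiber : ∀ j, i ≤ j → ∀ F : Finset ℕ, F.Nonempty → (∀ ℓ ∈ F, w ℓ = j) →
      ∑ ℓ ∈ F, a ℓ ≤ ε (j-1) + ε j := by
    intro j hij F hFne hwF
    obtain ⟨j', rfl⟩ : ∃ j', j = j'+1 := ⟨j-1, by omega⟩
    have hj' : 1 ≤ j' := by omega
    set ℓ₀ := F.min' hFne with hℓ₀
    have hmem₀ : ℓ₀ ∈ F := F.min'_mem hFne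
    have hKj' : (21:ℝ) ≤ (k j' : ℝ) := by exact_mod_cast k_ge_21 hk hj'
    have hMvposj : (0:ℝ) < Mv k j' := by have := Mv_ge_succ hk hj'; linarith
    have hwin : ∀ ℓ ∈ F, Mv k j' ≤ rseq r ℓ ∧ rseq r ℓ < Mv k (j'+1) := by
      intro ℓ hℓ
      have h1 := hw_ge' ℓ
      have h2 := hw_lt ℓ
      rw [hwF ℓ hℓ] at h1 h2
      simp only [Nat.add_sub_cancel] at h1
      exact ⟨h1, h2⟩
    have hflog_start : ∀ ℓ ∈ F, 2*Real.sqrt (k j') ≤ flog (rseq r ℓ) := by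
      intro ℓ hℓ
      have h1 := flog_Mv_ge_sqrt hk hj'
      have h2 : flog (Mv k j') ≤ flog (rseq r ℓ) := flog_mono hMvposj (hwin ℓ hℓ).1
      linarith
    have hfK_le : ∀ ℓ ∈ F, flog (k j') ≤ flog (rseq r ℓ) := by
      intro ℓ hℓ
      have h1 : (k j' : ℝ) ≤ rseq r ℓ := le_trans (Mv_ge_k hk hj') (hwin ℓ hℓ).1
      exact flog_mono (by linarith) h1
    have hfrpos : ∀ ℓ, 0 < flog (rseq r ℓ) := fun ℓ => by linarith [hfr9 ℓ]
    have hb0 : a ℓ₀ ≤ 2 * u j' := by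
      have h1 := one_div_sqrt_Gfun_le hks hj' (hr_ge1 ℓ₀)
      have h2 : Real.sqrt (Pfun k j' / flog (rseq r ℓ₀)) ≤ u j' := by
        apply Real.sqrt_le_sqrt
        exact div_le_div_of_nonneg_left (hPpos j').le (hfk_pos j' hj') (hfK_le ℓ₀ hmem₀)
      have h3 : Real.sqrt (Pfun k j' / flog (k j')) = u j' := rfl
      calc a ℓ₀ ≤ Real.sqrt (Pfun k j' / flog (k j')) + Real.sqrt (Pfun k j' / flog (rseq r ℓ₀)) := h1
      _ ≤ u j' + u j' := by rw [h3]; linarith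
      _ = 2 * u j' := by ring
    have hberase : ∀ ℓ ∈ F.erase ℓ₀, a ℓ ≤ u (j'+1) +
        Real.sqrt (Pfun k (j'+1)) / Real.sqrt (3*(k j':ℝ)) * (1/2:ℝ)^(ℓ - ℓ₀ - 1) := by
      intro ℓ hℓ
      have hℓF := Finset.mem_of_mem_erase hℓ
      have hne := Finset.ne_of_mem_erase hℓ
      have hlt : ℓ₀ < ℓ := lt_of_le_of_ne (F.min'_le ℓ hℓF) (Ne.symm hne)
      have hℓeq : ℓ = ℓ₀ + 1 + (ℓ - ℓ₀ - 1) := by omega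
      have hgrow : 3*(k j':ℝ)*4^(ℓ - ℓ₀ - 1) ≤ flog (rseq r ℓ) := by
        conv_rhs => rw [hℓeq]
        exact rseq_fourpow hk hA hB hC hKj' (hflog_start ℓ₀ hmem₀) _
      have hpos3 : (0:ℝ) < 3*(k j':ℝ)*4^(ℓ - ℓ₀ - 1) := by positivity
      have h1 := one_div_sqrt_Gfun_le hks (show 1 ≤ j'+1 by omega) (hr_ge1 ℓ)
      have h2 : Real.sqrt (Pfun k (j'+1) / flog (rseq r ℓ)) ≤
          Real.sqrt (Pfun k (j'+1)) / Real.sqrt (3*(k j':ℝ)) * (1/2:ℝ)^(ℓ - ℓ₀ - 1) := by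
        have hd : Pfun k (j'+1)/flog (rseq r ℓ) ≤ Pfun k (j'+1)/(3*(k j':ℝ)*4^(ℓ - ℓ₀ - 1)) :=
          div_le_div_of_nonneg_left (hPpos _).le hpos3 hgrow
        have h4t : Real.sqrt (3*(k j':ℝ)*4^(ℓ - ℓ₀ - 1)) = Real.sqrt (3*(k j':ℝ)) * 2^(ℓ - ℓ₀ - 1) := by
          rw [show 3*(k j':ℝ)*4^(ℓ - ℓ₀ - 1) = (3*(k j':ℝ))*((2:ℝ)^(ℓ - ℓ₀ - 1))^2 by
            rw [← pow_mul, mul_comm (ℓ - ℓ₀ - 1) 2, pow_mul]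
            norm_num]
          rw [Real.sqrt_mul (by positivity), Real.sqrt_sq (by positivity)]
        calc Real.sqrt (Pfun k (j'+1) / flog (rseq r ℓ))
            ≤ Real.sqrt (Pfun k (j'+1)/(3*(k j':ℝ)*4^(ℓ - ℓ₀ - 1))) := Real.sqrt_le_sqrt hd
        _ = Real.sqrt (Pfun k (j'+1)) / Real.sqrt (3*(k j':ℝ)) * (1/2:ℝ)^(ℓ - ℓ₀ - 1) := by
            rw [Real.sqrt_div (hPpos _).le, h4t]
            rw [div_pow, one_pow]
            have hne2 : ((2:ℝ))^(ℓ - ℓ₀ - 1) ≠ 0 := by positivity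
            have hne3 : Real.sqrt (3*(k j':ℝ)) ≠ 0 := by positivity
            field_simp
      calc a ℓ ≤ Real.sqrt (Pfun k (j'+1) / flog (k (j'+1))) +
          Real.sqrt (Pfun k (j'+1) / flog (rseq r ℓ)) := h1
      _ ≤ u (j'+1) + Real.sqrt (Pfun k (j'+1)) / Real.sqrt (3*(k j':ℝ)) * (1/2:ℝ)^(ℓ - ℓ₀ - 1) := by
          have h3 : Real.sqrt (Pfun k (j'+1) / flog (k (j'+1))) = u (j'+1) := rfl
          rw [h3]
          linarith
    set L := F.max' hFne with hLdef
    have hmemL : L ∈ F := F.max'_mem hFne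
    have hℓ₀L : ℓ₀ ≤ L := F.min'_le L hmemL
    have hcard : ((F.erase ℓ₀).card : ℝ) ≤ ((L - ℓ₀ : ℕ) : ℝ) := by
      have hsub : F ⊆ Finset.Icc ℓ₀ L := by
        intro x hx
        exact Finset.mem_Icc.2 ⟨F.min'_le x hx, F.le_max' x hx⟩
      have h1 : F.card ≤ L - ℓ₀ + 1 := by
        calc F.card ≤ (Finset.Icc ℓ₀ L).card := Finset.card_le_card hsub
        _ = L + 1 - ℓ₀ := Nat.card_Icc ℓ₀ L
        _ = L - ℓ₀ + 1 := by omega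
      have h2 : (F.erase ℓ₀).card = F.card - 1 := Finset.card_erase_of_mem hmem₀
      have h3 : (F.erase ℓ₀).card ≤ L - ℓ₀ := by omega
      exact_mod_cast h3
    have hT : ((L - ℓ₀ : ℕ) : ℝ) ≤ 2*Real.logb 2 (flog (k (j'+1))) := by
      have hg := rseq_loggrowth hk hA hB hC ℓ₀ (L - ℓ₀)
      have hLe : ℓ₀ + (L - ℓ₀) = L := by omega
      rw [hLe] at hg
      have hfL : flog (rseq r L) < (k (j'+1):ℝ) :=
        flog_lt_of_lt_Mv hk (by omega) (hr_pos L) (hwin L hmemL).2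
      have hfj_pos := hfk_pos (j'+1) (by omega)
      have hkpos : (0:ℝ) < k (j'+1) := by
        have hh := hks (j'+1) (by omega)
        exact_mod_cast hh
      have h3 : Real.logb 2 (flog (rseq r L)) ≤ Real.logb 2 ((k (j'+1)):ℝ) := by
        rw [Real.logb_le_logb one_lt_two (hfrpos L) hkpos]
        linarith
      have h4 : Real.logb 2 ((k (j'+1)):ℝ) ≤ flog (k (j'+1)) := by
        calc Real.logb 2 ((k (j'+1)):ℝ) ≤ Real.logb 2 ((k (j'+1):ℝ) + 1) := by
              rw [Real.logb_le_logb one_lt_two hkpos (by linarith)]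
              linarith
        _ = flog (k (j'+1)) := rfl
      have h5 : ((3:ℝ)/2)^(L - ℓ₀) ≤ flog (k (j'+1)) := by
        have hp : (0:ℝ) ≤ (3/2:ℝ)^(L - ℓ₀) := by positivity
        nlinarith
      have h6 : ((L - ℓ₀ : ℕ) : ℝ) * Real.logb 2 (3/2) ≤ Real.logb 2 (flog (k (j'+1))) := by
        rw [← Real.logb_pow]
        rw [Real.logb_le_logb one_lt_two (by positivity) (by positivity)]
        exact h5
      have h7 := logb2_threehalf
      have hTnn : (0:ℝ) ≤ ((L - ℓ₀ : ℕ) : ℝ) := Nat.cast_nonneg _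
      nlinarith [mul_le_mul_of_nonneg_left h7 hTnn]
    have hgeo : ∑ ℓ ∈ F.erase ℓ₀, ((1/2:ℝ))^(ℓ - ℓ₀ - 1) ≤ 2 := by
      have hsub : F.erase ℓ₀ ⊆ Finset.Ico (ℓ₀+1) (L+1) := by
        intro x hx
        have hxF := Finset.mem_of_mem_erase hx
        have hxne := Finset.ne_of_mem_erase hx
        have hh1 := F.min'_le x hxF
        have hh2 := F.le_max' x hxF
        rw [Finset.mem_Ico]
        omega
      calc ∑ ℓ ∈ F.erase ℓ₀, ((1/2:ℝ))^(ℓ - ℓ₀ - 1)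
          ≤ ∑ ℓ ∈ Finset.Ico (ℓ₀+1) (L+1), ((1/2:ℝ))^(ℓ - ℓ₀ - 1) :=
            Finset.sum_le_sum_of_subset_of_nonneg hsub (by intros; positivity)
      _ = ∑ t ∈ Finset.range (L + 1 - (ℓ₀+1)), ((1/2:ℝ))^(ℓ₀ + 1 + t - ℓ₀ - 1) := by
            rw [Finset.sum_Ico_eq_sum_range]
      _ = ∑ t ∈ Finset.range (L + 1 - (ℓ₀+1)), ((1/2:ℝ))^t := by
            apply Finset.sum_congr rfl
            intro t _
            congr 1
            omega
      _ ≤ 2 := sum_geometric_two_le _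
    have hsum_erase : ∑ ℓ ∈ F.erase ℓ₀, a ℓ ≤
        ((F.erase ℓ₀).card : ℝ) * u (j'+1) +
        Real.sqrt (Pfun k (j'+1)) / Real.sqrt (3*(k j':ℝ)) * 2 := by
      have h1 : ∑ ℓ ∈ F.erase ℓ₀, a ℓ ≤
          ∑ ℓ ∈ F.erase ℓ₀, (u (j'+1) +
            Real.sqrt (Pfun k (j'+1)) / Real.sqrt (3*(k j':ℝ)) * (1/2:ℝ)^(ℓ - ℓ₀ - 1)) :=
        Finset.sum_le_sum hberase
      rw [Finset.sum_add_distrib, Finset.sum_const, ← Finset.mul_sum] at h1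
      have h2 : Real.sqrt (Pfun k (j'+1)) / Real.sqrt (3*(k j':ℝ)) *
          (∑ ℓ ∈ F.erase ℓ₀, ((1/2:ℝ))^(ℓ - ℓ₀ - 1)) ≤
          Real.sqrt (Pfun k (j'+1)) / Real.sqrt (3*(k j':ℝ)) * 2 :=
        mul_le_mul_of_nonneg_left hgeo (by positivity)
      calc ∑ ℓ ∈ F.erase ℓ₀, a ℓ ≤ _ := h1
      _ ≤ ((F.erase ℓ₀).card : ℝ) * u (j'+1) +
          Real.sqrt (Pfun k (j'+1)) / Real.sqrt (3*(k j':ℝ)) * 2 := by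
        simp only [nsmul_eq_mul]
        linarith
    have hconv : Real.sqrt (Pfun k (j'+1)) / Real.sqrt (3*(k j':ℝ)) ≤ u j' := by
      have hPj : Pfun k (j'+1) = Pfun k j' * ((k j':ℝ)/flog (k j')) :=
        Pfun_succ hj'
      have hfKpos := hfk_pos j' hj'
      have hkj'pos : (0:ℝ) < k j' := by linarith
      have heq : Pfun k (j'+1) / (3*(k j':ℝ)) = Pfun k j' / (3 * flog (k j')) := by
        rw [hPj]
        field_simp
      have hle : Pfun k (j'+1) / (3*(k j':ℝ)) ≤ Pfun k j' / flog (k j') := by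
        rw [heq]
        apply div_le_div_of_nonneg_left (hPpos j').le hfKpos
        linarith
      calc Real.sqrt (Pfun k (j'+1)) / Real.sqrt (3*(k j':ℝ))
          = Real.sqrt (Pfun k (j'+1) / (3*(k j':ℝ))) := (Real.sqrt_div (hPpos _).le _).symm
      _ ≤ Real.sqrt (Pfun k j' / flog (k j')) := Real.sqrt_le_sqrt hle
      _ = u j' := rfl
    have htotal : ∑ ℓ ∈ F, a ℓ ≤ 4 * u j' + 2*Real.logb 2 (flog (k (j'+1))) * u (j'+1) := by
      rw [← Finset.add_sum_erase F a hmem₀]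
      have h1 : ((F.erase ℓ₀).card : ℝ) * u (j'+1) ≤
          2*Real.logb 2 (flog (k (j'+1))) * u (j'+1) := by
        apply mul_le_mul_of_nonneg_right _ (hu_nonneg _)
        linarith
      have h2 : Real.sqrt (Pfun k (j'+1)) / Real.sqrt (3*(k j':ℝ)) * 2 ≤ 2 * u j' := by
        linarith
      linarith [hsum_erase, hb0]
    have he1 : 4 * u j' ≤ ε j' := heps4 j' hj'
    have he2 : 2*Real.logb 2 (flog (k (j'+1))) * u (j'+1) ≤ ε (j'+1) := hepsT2 (j'+1) (by omega)
    simp only [Nat.add_sub_cancel]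
    linarith
  -- summability of the right-hand side
  have hsume : Summable ε := (summable_nat_add_iff 1).1 hε.2.2.1
  have hsum1 : Summable (fun d : ℕ => ε (i + d)) :=
    ((summable_nat_add_iff i).2 hsume).congr (fun d => by rw [add_comm])
  have hsum2 : Summable (fun d : ℕ => ε (i + d - 1)) :=
    ((summable_nat_add_iff (i-1)).2 hsume).congr (fun d => by congr 1; omega)
  have hg : Summable (fun d : ℕ => ε (i + d) + ε (i + d - 1)) := hsum1.add hsum2
  have hg_nonneg : ∀ d : ℕ, 0 ≤ ε (i + d) + ε (i + d - 1) := by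
    intro d
    have h1 := hε.1 (i+d) (by omega)
    have h2 := hε.1 (i+d-1) (by omega)
    linarith
  have key : ∀ N, ∑ ℓ ∈ Finset.range N, a ℓ ≤ ∑' j : ℕ, (ε (i + j) + ε (i + j - 1)) := by
    intro N
    have hmaps : ∀ x ∈ Finset.range N, w x ∈ (Finset.range N).image w :=
      fun x hx => Finset.mem_image_of_mem w hx
    have hfib := Finset.sum_fiberwise_of_maps_to hmaps a
    rw [← hfib]
    have htt_ge : ∀ j ∈ (Finset.range N).image w, i ≤ j := by
      intro j hj
      obtain ⟨ℓx, _, hwx⟩ := Finset.mem_image.1 hj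
      exact hwx ▸ hw_ge ℓx
    have hstep : ∑ j ∈ (Finset.range N).image w,
        ∑ ℓ ∈ (Finset.range N).filter (fun ℓ => w ℓ = j), a ℓ ≤
        ∑ j ∈ (Finset.range N).image w, (ε (i + (j - i)) + ε (i + (j - i) - 1)) := by
      apply Finset.sum_le_sum
      intro j hj
      obtain ⟨ℓx, hℓx, hwx⟩ := Finset.mem_image.1 hj
      have hij := htt_ge j hj
      have hne : ((Finset.range N).filter (fun ℓ => w ℓ = j)).Nonempty :=
        ⟨ℓx, Finset.mem_filter.2 ⟨hℓx, hwx⟩⟩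
      have hb := fiber j hij _ hne (fun ℓ hℓ => (Finset.mem_filter.1 hℓ).2)
      have he1 : i + (j - i) = j := by omega
      rw [he1]
      linarith [hb]
    calc ∑ j ∈ (Finset.range N).image w,
        ∑ ℓ ∈ (Finset.range N).filter (fun ℓ => w ℓ = j), a ℓ
        ≤ ∑ j ∈ (Finset.range N).image w, (ε (i + (j - i)) + ε (i + (j - i) - 1)) := hstep
    _ = ∑ d ∈ ((Finset.range N).image w).image (fun j => j - i), (ε (i + d) + ε (i + d - 1)) := by
        have hinj : ∀ x ∈ (Finset.range N).image w, ∀ y ∈ (Finset.range N).image w,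
            x - i = y - i → x = y := by
          intro x hx y hy hxy
          have h1 := htt_ge x hx
          have h2 := htt_ge y hy
          omega
        exact (Finset.sum_image (f := fun d : ℕ => ε (i + d) + ε (i + d - 1)) (g := fun j : ℕ => j - i) hinj).symm
    _ ≤ ∑' j : ℕ, (ε (i + j) + ε (i + j - 1)) := by
        exact hg.sum_le_tsum _
          (fun d _ => hg_nonneg d)
  exact ⟨summable_of_sum_range_le ha_nonneg key,
    Real.tsum_le_of_sum_range_le ha_nonneg key⟩
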